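/- For all labels x and y and all nested sequents X and Y, if X and Y are display equivalent then the labeled polytrees 𝔏ₓ(X) and 𝔏_y(Y) are isomorphic as labeled graphs. -/

import Mathlib

set_option autoImplicit false

/-! # Common definitions: tense logics, nested/labeled/display calculi
    (following Ciabattoni, Lyon, Ramanayake, Tiu,
     "Display to Labeled Proofs and Back Again for Tense Logics") -/

/-- Diamonds: `wd` = ◇ (white diamond), `bd` = ◆ (black diamond). -/
inductive Dmd : Type
  | wd
  | bd
deriving DecidableEq, Repr

/-- Tense formulae in negation normal form:
    `A ::= p | p̄ | A ∧ A | A ∨ A | □A | ◇A | ■A | ◆A`. -/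
inductive Formula : Type
  | pos : Nat → Formula      -- propositional variable p
  | neg : Nat → Formula      -- negated propositional variable p̄
  | and : Formula → Formula → Formula
  | or : Formula → Formula → Formula
  | box : Formula → Formula   -- □
  | dia : Formula → Formula   -- ◇
  | bbox : Formula → Formula  -- ■
  | bdia : Formula → Formula  -- ◆
deriving DecidableEq, Repr

/-- The De Morgan dual `Ā` of a formula `A`. -/
def Formula.dual : Formula → Formula
  | .pos p => .neg p
  | .neg p => .pos p
  | .and A B => .or A.dual B.dual
  | .or A B => .and A.dual B.dual
  | .box A => .dia A.dual
  | .dia A => .box A.dual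
  | .bbox A => .bdia A.dual
  | .bdia A => .bbox A.dual

/-- `A → B` is defined as `Ā ∨ B`. -/
def Formula.imp (A B : Formula) : Formula := A.dual.or B

/-- `A ↔ B` is defined as `(A → B) ∧ (B → A)`. -/
def Formula.iffF (A B : Formula) : Formula := (A.imp B).and (B.imp A)

/-- `⟨?⟩A` for a diamond `⟨?⟩ ∈ {◇, ◆}`. -/
def dmdF : Dmd → Formula → Formula
  | .wd, A => .dia A
  | .bd, A => .bdia A

/-- `⟨?⟩₁…⟨?⟩ₘ A` for a string of diamonds. -/
def applyDmds : List Dmd → Formula → Formula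
  | [], A => A
  | d :: ds, A => dmdF d (applyDmds ds A)

/-- A general path axiom `ΠA → ΣA`, given by the strings `Π` (ant) and `Σ` (suc). -/
structure GenPath : Type where
  ant : List Dmd
  suc : List Dmd

/-- A path axiom `ΠA → ⟨?⟩A`. -/
structure PathAx : Type where
  ant : List Dmd
  suc : Dmd
deriving DecidableEq

/-- Every path axiom is a general path axiom. -/
def pathToGen (F : PathAx) : GenPath := ⟨F.ant, [F.suc]⟩

/-- All instances `ΠA → ΣA` of the general path axioms in `GP`. -/
def gpInstances (GP : Set GenPath) : Set Formula :=
  {F | ∃ gp ∈ GP, ∃ A : Formula, F = (applyDmds gp.ant A).imp (applyDmds gp.suc A)}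

/-- The Hilbert system `Kt + S`: classical propositional axioms, modus ponens,
    the tense axioms, and necessitation for □ and ■, plus the axioms in `S`. -/
inductive KtProof (S : Set Formula) : Formula → Prop
  | ax {A : Formula} : A ∈ S → KtProof S A
  | pl1 (A B : Formula) : KtProof S (A.imp (B.imp A))
  | pl2 (A B : Formula) : KtProof S ((B.dual.imp A.dual).imp (A.imp B))
  | pl3 (A B C : Formula) :
      KtProof S ((A.imp (B.imp C)).imp ((A.imp B).imp (A.imp C)))
  | tense1 (A : Formula) : KtProof S (A.imp (Formula.box (Formula.bdia A)))
  | tense2 (A : Formula) : KtProof S (A.imp (Formula.bbox (Formula.dia A)))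
  | kbox (A B : Formula) :
      KtProof S ((Formula.box (A.imp B)).imp ((Formula.box A).imp (Formula.box B)))
  | kbbox (A B : Formula) :
      KtProof S ((Formula.bbox (A.imp B)).imp ((Formula.bbox A).imp (Formula.bbox B)))
  | boxdual (A : Formula) :
      KtProof S ((Formula.box A).iffF (Formula.dia A.dual).dual)
  | bboxdual (A : Formula) :
      KtProof S ((Formula.bbox A).iffF (Formula.bdia A.dual).dual)
  | mp {A B : Formula} : KtProof S (A.imp B) → KtProof S A → KtProof S B
  | necbox {A : Formula} : KtProof S A → KtProof S (Formula.box A)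
  | necbbox {A : Formula} : KtProof S A → KtProof S (Formula.bbox A)

/-! ## Nested sequents -/

/-- Nested sequents: `X ::= ε | A | X, X | ∘{X} | •{X}`. -/
inductive NSeq : Type
  | empty
  | fml : Formula → NSeq
  | comma : NSeq → NSeq → NSeq
  | white : NSeq → NSeq   -- ∘{X}
  | black : NSeq → NSeq   -- •{X}
deriving DecidableEq, Repr

/-- Comma is associative and commutative with unit ε: the induced congruence. -/
inductive NEquiv : NSeq → NSeq → Prop
  | refl (X : NSeq) : NEquiv X X
  | symm {X Y : NSeq} : NEquiv X Y → NEquiv Y X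
  | trans {X Y Z : NSeq} : NEquiv X Y → NEquiv Y Z → NEquiv X Z
  | comm (X Y : NSeq) : NEquiv (X.comma Y) (Y.comma X)
  | assoc (X Y Z : NSeq) : NEquiv ((X.comma Y).comma Z) (X.comma (Y.comma Z))
  | unit (X : NSeq) : NEquiv (X.comma NSeq.empty) X
  | commaCongr {X X' Y Y' : NSeq} :
      NEquiv X X' → NEquiv Y Y' → NEquiv (X.comma Y) (X'.comma Y')
  | whiteCongr {X Y : NSeq} : NEquiv X Y → NEquiv X.white Y.white
  | blackCongr {X Y : NSeq} : NEquiv X Y → NEquiv X.black Y.black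

/-- `★₁{… ★ₙ{Y} …}` where `★ⱼ = ∘` if `⟨?⟩ⱼ = ◇` and `★ⱼ = •` if `⟨?⟩ⱼ = ◆`. -/
def nestDmds : List Dmd → NSeq → NSeq
  | [], Y => Y
  | .wd :: ds, Y => (nestDmds ds Y).white
  | .bd :: ds, Y => (nestDmds ds Y).black

/-- The structural rules `NestSt(GP)` (premise, conclusion): for each
    `ΠA → ΣA ∈ GP`, from `X, ★Σ{Y}` infer `X, ★Π{Y}`. -/
def NestSt (GP : Set GenPath) : NSeq → NSeq → Prop :=
  fun prem concl => ∃ gp ∈ GP, ∃ X Y : NSeq,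
    prem = X.comma (nestDmds gp.suc Y) ∧ concl = X.comma (nestDmds gp.ant Y)

/-- The empty set of extension rules on nested sequents. -/
def NoNest : NSeq → NSeq → Prop := fun _ _ => False

/-- The shallow nested (display) calculus `SKT` extended with the
    structural rules `Ext` (relating premise to conclusion); nested sequents are
    treated up to the congruence `NEquiv` (comma is AC with unit ε). -/
inductive SKT (Ext : NSeq → NSeq → Prop) : NSeq → Prop
  | id (X : NSeq) (p : Nat) :
      SKT Ext ((X.comma (.fml (.pos p))).comma (.fml (.neg p)))
  | orR {X : NSeq} {A B : Formula} :
      SKT Ext (X.comma ((NSeq.fml A).comma (.fml B))) →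
      SKT Ext (X.comma (.fml (.or A B)))
  | andR {X : NSeq} {A B : Formula} :
      SKT Ext (X.comma (.fml A)) → SKT Ext (X.comma (.fml B)) →
      SKT Ext (X.comma (.fml (.and A B)))
  | ctr {X Y : NSeq} : SKT Ext (X.comma (Y.comma Y)) → SKT Ext (X.comma Y)
  | wk {X Y : NSeq} : SKT Ext X → SKT Ext (X.comma Y)
  | rf {X Y : NSeq} : SKT Ext (X.comma Y.white) → SKT Ext (X.black.comma Y)
  | rp {X Y : NSeq} : SKT Ext (X.comma Y.black) → SKT Ext (X.white.comma Y)
  | bbox {X : NSeq} {A : Formula} :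
      SKT Ext (X.comma (NSeq.fml A).black) → SKT Ext (X.comma (.fml (.bbox A)))
  | box {X : NSeq} {A : Formula} :
      SKT Ext (X.comma (NSeq.fml A).white) → SKT Ext (X.comma (.fml (.box A)))
  | bdia {X Y : NSeq} {A : Formula} :
      SKT Ext ((X.comma (Y.comma (.fml A)).black).comma (.fml (.bdia A))) →
      SKT Ext ((X.comma Y.black).comma (.fml (.bdia A)))
  | dia {X Y : NSeq} {A : Formula} :
      SKT Ext ((X.comma (Y.comma (.fml A)).white).comma (.fml (.dia A))) →
      SKT Ext ((X.comma Y.white).comma (.fml (.dia A)))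
  | ext {X Y : NSeq} : Ext X Y → SKT Ext X → SKT Ext Y
  | equiv {X Y : NSeq} : SKT Ext X → NEquiv X Y → SKT Ext Y

/-! ## Deep nested calculus -/

/-- One-hole contexts over nested sequents (up to `NEquiv` this suffices). -/
inductive Ctx : Type
  | hole
  | commaL : Ctx → NSeq → Ctx
  | white : Ctx → Ctx
  | black : Ctx → Ctx

/-- Filling the hole of a context with a nested sequent. -/
def Ctx.fill : Ctx → NSeq → NSeq
  | .hole, X => X
  | .commaL C Y, X => (C.fill X).comma Y
  | .white C, X => (C.fill X).white
  | .black C, X => (C.fill X).black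

/-- The deep nested calculus `DKT` extended with rules `Ext`
    (premise, conclusion); sequents are treated up to `NEquiv`. -/
inductive DKT (Ext : NSeq → NSeq → Prop) : NSeq → Prop
  | id (C : Ctx) (p : Nat) :
      DKT Ext (C.fill ((NSeq.fml (.pos p)).comma (.fml (.neg p))))
  | andD {C : Ctx} {Y : NSeq} {A B : Formula} :
      DKT Ext (C.fill ((NSeq.fml A).comma Y)) →
      DKT Ext (C.fill ((NSeq.fml B).comma Y)) →
      DKT Ext (C.fill ((NSeq.fml (.and A B)).comma Y))
  | orD {C : Ctx} {Y : NSeq} {A B : Formula} :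
      DKT Ext (C.fill ((NSeq.fml A).comma ((NSeq.fml B).comma Y))) →
      DKT Ext (C.fill ((NSeq.fml (.or A B)).comma Y))
  | bboxD {C : Ctx} {A : Formula} :
      DKT Ext (C.fill ((NSeq.fml (.bbox A)).comma (NSeq.fml A).black)) →
      DKT Ext (C.fill (.fml (.bbox A)))
  | boxD {C : Ctx} {A : Formula} :
      DKT Ext (C.fill ((NSeq.fml (.box A)).comma (NSeq.fml A).white)) →
      DKT Ext (C.fill (.fml (.box A)))
  | bdia1 {C : Ctx} {Y : NSeq} {A : Formula} :
      DKT Ext (C.fill ((Y.comma (.fml A)).black.comma (.fml (.bdia A)))) →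
      DKT Ext (C.fill (Y.black.comma (.fml (.bdia A))))
  | bdia2 {C : Ctx} {Y : NSeq} {A : Formula} :
      DKT Ext (C.fill ((Y.comma (.fml (.bdia A))).white.comma (.fml A))) →
      DKT Ext (C.fill ((Y.comma (.fml (.bdia A))).white))
  | dia1 {C : Ctx} {Y : NSeq} {A : Formula} :
      DKT Ext (C.fill ((Y.comma (.fml A)).white.comma (.fml (.dia A)))) →
      DKT Ext (C.fill (Y.white.comma (.fml (.dia A))))
  | dia2 {C : Ctx} {Y : NSeq} {A : Formula} :
      DKT Ext (C.fill ((Y.comma (.fml (.dia A))).black.comma (.fml A))) →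
      DKT Ext (C.fill ((Y.comma (.fml (.dia A))).black))
  | ext {X Y : NSeq} : Ext X Y → DKT Ext X → DKT Ext Y
  | equiv {X Y : NSeq} : DKT Ext X → NEquiv X Y → DKT Ext Y

/-! ## Display rules and display equivalence -/

/-- `DisplayDeriv X Z`: `Z` is derivable from `X` using only the display rules
    (rf) and (rp) (and rearrangement by the comma-congruence `NEquiv`). -/
inductive DisplayDeriv : NSeq → NSeq → Prop
  | refl (X : NSeq) : DisplayDeriv X X
  | equiv {X Y Z : NSeq} : NEquiv X Y → DisplayDeriv Y Z → DisplayDeriv X Z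
  | rf {X Y Z : NSeq} :
      DisplayDeriv (X.black.comma Y) Z → DisplayDeriv (X.comma Y.white) Z
  | rp {X Y Z : NSeq} :
      DisplayDeriv (X.white.comma Y) Z → DisplayDeriv (X.comma Y.black) Z

/-- Two nested sequents are display equivalent when each is derivable from the
    other using only the display rules. -/
def DisplayEquiv (X Y : NSeq) : Prop := DisplayDeriv X Y ∧ DisplayDeriv Y X

/-! ## Labeled sequents and the labeled calculus G3Kt -/

abbrev Label : Type := Nat

/-- A set of relational atoms `Rxy`. -/
abbrev RelSet : Type := Finset (Label × Label)

/-- A labeled sequent `R, Γ`. -/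
abbrev LSeq : Type := RelSet × Multiset (Label × Formula)

/-- The label `z` occurs in the labeled sequent `S`. -/
def occursLS (z : Label) (S : LSeq) : Prop :=
  (∃ w, (z, w) ∈ S.1 ∨ (w, z) ∈ S.1) ∨ ∃ A, (z, A) ∈ S.2

/-- `R_◇ x y := Rxy` and `R_◆ x y := Ryx`. -/
def relAtom : Dmd → Label → Label → Label × Label
  | .wd, x, y => (x, y)
  | .bd, x, y => (y, x)

/-- Relational atoms of a `Π`-chain through the list of labels `ls`. -/
def chainAtoms : List Dmd → List Label → List (Label × Label)
  | d :: ds, a :: b :: rest => relAtom d a b :: chainAtoms ds (b :: rest)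
  | _, _ => []

/-- `ls` is a chain of labels for the diamond string `ds` from `x` to `y`
    (an empty string forces `x = y`). -/
def IsChainList (ds : List Dmd) (x y : Label) (ls : List Label) : Prop :=
  ls.length = ds.length + 1 ∧ ls.head? = some x ∧ ls.getLast? = some y

/-- The structural rules `LabSt(GP)` (premise, conclusion): for `ΠA → ΣA ∈ GP`,
    from `R, R_Π x y, R_Σ x y, Γ` infer `R, R_Π x y, Γ`, where all labels in
    `R_Σ x y` other than `x, y` are eigenvariables. -/
def LabSt (GP : Set GenPath) : LSeq → LSeq → Prop :=
  fun prem concl => ∃ gp ∈ GP,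
    ∃ (R : RelSet) (Γ : Multiset (Label × Formula)) (x y : Label)
      (als sls : List Label),
      IsChainList gp.ant x y als ∧ IsChainList gp.suc x y sls ∧
      concl = (R ∪ (chainAtoms gp.ant als).toFinset, Γ) ∧
      prem = (R ∪ (chainAtoms gp.ant als).toFinset ∪
                (chainAtoms gp.suc sls).toFinset, Γ) ∧
      (∀ z ∈ sls, z ≠ x → z ≠ y → ¬ occursLS z concl)

/-- The empty set of extension rules on labeled sequents. -/
def NoExt : LSeq → LSeq → Prop := fun _ _ => False

/-- Derivations in the labeled calculus `G3Kt` extended with rules `Ext`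
    (relating premise to conclusion). -/
inductive G3KtD (Ext : LSeq → LSeq → Prop) :
    RelSet → Multiset (Label × Formula) → Type
  | id (R : RelSet) (Γ : Multiset (Label × Formula)) (x : Label) (p : Nat) :
      G3KtD Ext R ((x, .pos p) ::ₘ (x, .neg p) ::ₘ Γ)
  | orR (R : RelSet) (Γ : Multiset (Label × Formula)) (x : Label) (A B : Formula)
      (D : G3KtD Ext R ((x, A) ::ₘ (x, B) ::ₘ Γ)) :
      G3KtD Ext R ((x, .or A B) ::ₘ Γ)
  | andR (R : RelSet) (Γ : Multiset (Label × Formula)) (x : Label) (A B : Formula)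
      (D1 : G3KtD Ext R ((x, A) ::ₘ Γ)) (D2 : G3KtD Ext R ((x, B) ::ₘ Γ)) :
      G3KtD Ext R ((x, .and A B) ::ₘ Γ)
  | boxR (R : RelSet) (Γ : Multiset (Label × Formula)) (x y : Label) (A : Formula)
      (hy : ¬ occursLS y (R, (x, Formula.box A) ::ₘ Γ))
      (D : G3KtD Ext (insert (x, y) R) ((y, A) ::ₘ Γ)) :
      G3KtD Ext R ((x, .box A) ::ₘ Γ)
  | diaR (R : RelSet) (Γ : Multiset (Label × Formula)) (x y : Label) (A : Formula)
      (h : (x, y) ∈ R)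
      (D : G3KtD Ext R ((y, A) ::ₘ (x, Formula.dia A) ::ₘ Γ)) :
      G3KtD Ext R ((x, .dia A) ::ₘ Γ)
  | bboxR (R : RelSet) (Γ : Multiset (Label × Formula)) (x y : Label) (A : Formula)
      (hy : ¬ occursLS y (R, (x, Formula.bbox A) ::ₘ Γ))
      (D : G3KtD Ext (insert (y, x) R) ((y, A) ::ₘ Γ)) :
      G3KtD Ext R ((x, .bbox A) ::ₘ Γ)
  | bdiaR (R : RelSet) (Γ : Multiset (Label × Formula)) (x y : Label) (A : Formula)
      (h : (y, x) ∈ R)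
      (D : G3KtD Ext R ((y, A) ::ₘ (x, Formula.bdia A) ::ₘ Γ)) :
      G3KtD Ext R ((x, .bdia A) ::ₘ Γ)
  | ext (R' : RelSet) (Γ' : Multiset (Label × Formula))
      (R : RelSet) (Γ : Multiset (Label × Formula))
      (h : Ext (R', Γ') (R, Γ)) (D : G3KtD Ext R' Γ') : G3KtD Ext R Γ

/-- Derivability in `G3Kt + Ext`. -/
def G3KtDeriv (Ext : LSeq → LSeq → Prop) (R : RelSet)
    (Γ : Multiset (Label × Formula)) : Prop :=
  Nonempty (G3KtD Ext R Γ)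

/-- `Q` holds of every labeled sequent occurring in the derivation `D`
    (including the end sequent). -/
def G3KtD.allSeq {Ext : LSeq → LSeq → Prop} (Q : LSeq → Prop) :
    ∀ {R : RelSet} {Γ : Multiset (Label × Formula)}, G3KtD Ext R Γ → Prop
  | _, _, .id R Γ x p => Q (R, (x, .pos p) ::ₘ (x, .neg p) ::ₘ Γ)
  | _, _, .orR R Γ x A B D => Q (R, (x, .or A B) ::ₘ Γ) ∧ D.allSeq Q
  | _, _, .andR R Γ x A B D1 D2 =>
      Q (R, (x, .and A B) ::ₘ Γ) ∧ D1.allSeq Q ∧ D2.allSeq Q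
  | _, _, .boxR R Γ x _ A _ D => Q (R, (x, .box A) ::ₘ Γ) ∧ D.allSeq Q
  | _, _, .diaR R Γ x _ A _ D => Q (R, (x, .dia A) ::ₘ Γ) ∧ D.allSeq Q
  | _, _, .bboxR R Γ x _ A _ D => Q (R, (x, .bbox A) ::ₘ Γ) ∧ D.allSeq Q
  | _, _, .bdiaR R Γ x _ A _ D => Q (R, (x, .bdia A) ::ₘ Γ) ∧ D.allSeq Q
  | _, _, .ext _ _ R Γ _ D => Q (R, Γ) ∧ D.allSeq Q

/-! ## Paths, inverses, compositions, completion, propagation rules -/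

/-- The inverse of a diamond: `◇⁻¹ = ◆` and `◆⁻¹ = ◇`. -/
def Dmd.inv : Dmd → Dmd
  | .wd => .bd
  | .bd => .wd

/-- The inverse `I(F)` of a path axiom `F`. -/
def PathAx.inv (F : PathAx) : PathAx := ⟨(F.ant.map Dmd.inv).reverse, F.suc.inv⟩

/-- `I(P)`, the set of inverses of the path axioms in `P`. -/
def invSet (P : Set PathAx) : Set PathAx := {F | ∃ G ∈ P, F = G.inv}

/-- The completion `P*`: the smallest set of path axioms containing `P`,
    containing `◇A → ◇A` and `◆A → ◆A`, and closed under compositions. -/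
inductive Completion (P : Set PathAx) : PathAx → Prop
  | base {F : PathAx} : F ∈ P → Completion P F
  | wrefl : Completion P ⟨[Dmd.wd], Dmd.wd⟩
  | brefl : Completion P ⟨[Dmd.bd], Dmd.bd⟩
  | comp {F G : PathAx} (i : Nat) (hi : i < G.ant.length) :
      Completion P F → Completion P G → G.ant.get ⟨i, hi⟩ = F.suc →
      Completion P ⟨G.ant.take i ++ F.ant ++ G.ant.drop (i + 1), G.suc⟩

/-- `(P ∪ I(P))*`. -/
def PStar (P : Set PathAx) : PathAx → Prop := Completion (P ∪ invSet P)

/-- A path from `x` to `y` with the given string of diamonds in the propagation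
    graph determined by the edge set `E`: each `Rxy` contributes the labeled
    edges `(x, y, ◇)` and `(y, x, ◆)`. -/
inductive LPath (E : Finset (Label × Label)) : Label → Label → List Dmd → Prop
  | nil (x : Label) : LPath E x x []
  | fwd {x z y : Label} {ds : List Dmd} :
      (x, z) ∈ E → LPath E z y ds → LPath E x y (Dmd.wd :: ds)
  | bwd {x z y : Label} {ds : List Dmd} :
      (z, x) ∈ E → LPath E z y ds → LPath E x y (Dmd.bd :: ds)

/-- The labeled propagation rules `LabPr(P)` (premise, conclusion):
    from `R, x:⟨?⟩A, y:A, Γ` infer `R, x:⟨?⟩A, Γ`, provided there is a path `π`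
    from `x` to `y` in the propagation graph of the premise whose string `Π`
    satisfies `ΠA → ⟨?⟩A ∈ (P ∪ I(P))*`. -/
def LabPr (P : Set PathAx) : LSeq → LSeq → Prop :=
  fun prem concl =>
    ∃ (R : RelSet) (Γ : Multiset (Label × Formula)) (x y : Label)
      (A : Formula) (d : Dmd) (Pi : List Dmd),
      prem = (R, (x, dmdF d A) ::ₘ (y, A) ::ₘ Γ) ∧
      concl = (R, (x, dmdF d A) ::ₘ Γ) ∧
      LPath R x y Pi ∧ PStar P ⟨Pi, d⟩

/-! ## Labeled graphs, labeled polytrees, and the translations 𝔏 and 𝔑 -/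

/-- A labeled graph `(V, E, L)`: vertices decorated with multisets of formulae. -/
structure LGraph : Type where
  V : Finset Label
  E : Finset (Label × Label)
  L : Label → Multiset Formula

/-- Union of labeled graphs (multiset union of labels at shared vertices). -/
def LGraph.union (G H : LGraph) : LGraph :=
  ⟨G.V ∪ H.V, G.E ∪ H.E, fun z => G.L z + H.L z⟩

/-- Isomorphism of labeled graphs: a bijection between the vertex sets
    preserving edges and vertex labels. -/
def LGraph.Iso (G H : LGraph) : Prop :=
  ∃ f : Label → Label, Set.BijOn f ↑G.V ↑H.V ∧
    (∀ u ∈ G.V, ∀ v ∈ G.V, ((u, v) ∈ G.E ↔ (f u, f v) ∈ H.E)) ∧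
    (∀ v ∈ G.V, G.L v = H.L (f v))

/-- A labeled graph is a labeled polytree when its underlying undirected
    graph is a tree. -/
def LGraph.IsPolytree (G : LGraph) : Prop :=
  (∀ x y : Label, (x, y) ∈ G.E → (y, x) ∉ G.E) ∧
  (∀ e ∈ G.E, e.1 ∈ G.V ∧ e.2 ∈ G.V) ∧
  ((SimpleGraph.fromRel fun a b => (a, b) ∈ G.E).induce (↑G.V : Set Label)).IsTree

/-- The translation `𝔏ₓ` from nested sequents to labeled graphs (relational,
    since fresh vertices may be chosen arbitrarily): `LabT x X G` states that
    `G` is a labeled graph obtained by translating `X` starting at vertex `x`. -/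
inductive LabT : Label → NSeq → LGraph → Prop
  | empty (x : Label) : LabT x .empty ⟨∅, ∅, fun _ => 0⟩
  | fml (x : Label) (A : Formula) :
      LabT x (.fml A) ⟨{x}, ∅, fun z => if z = x then {A} else 0⟩
  | comma {x : Label} {X Y : NSeq} {G H : LGraph} :
      LabT x X G → LabT x Y H → G.V ∩ H.V ⊆ {x} →
      LabT x (X.comma Y) (G.union H)
  | white {x y : Label} {X : NSeq} {G : LGraph} :
      LabT y X G → x ∉ G.V → x ≠ y →
      LabT x X.white ⟨insert x (insert y G.V), insert (x, y) G.E, G.L⟩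
  | black {x y : Label} {X : NSeq} {G : LGraph} :
      LabT y X G → x ∉ G.V → x ≠ y →
      LabT x X.black ⟨insert x (insert y G.V), insert (y, x) G.E, G.L⟩

/-- The translation `𝔑ₓ` from labeled polytrees (rooted at a chosen vertex `x`)
    to nested sequents: the inverse of the translation `𝔏ₓ`. -/
def NTrans (x : Label) (G : LGraph) (X : NSeq) : Prop := LabT x X G

/-- The labeled graph of a labeled sequent `R, Γ`: vertices are the occurring
    labels, edges are given by `R`, and each vertex `x` is labeled by the
    multiset `{A | x:A ∈ Γ}`. -/
def toLGraph (R : RelSet) (Γ : Multiset (Label × Formula)) : LGraph where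
  V := R.image Prod.fst ∪ R.image Prod.snd ∪ (Γ.map Prod.fst).toFinset
  E := R
  L := fun z => (Γ.filter fun p => p.1 = z).map Prod.snd

/-- The multiset of labeled formulae of a labeled graph, read as a sequent. -/
def LGraph.toSeqGamma (G : LGraph) : Multiset (Label × Formula) :=
  G.V.val.bind fun v => (G.L v).map fun A => (v, A)

/-- The set of labels occurring in a labeled sequent. -/
def seqLabels (R : RelSet) (Γ : Multiset (Label × Formula)) : Set Label :=
  {z | (∃ w, (z, w) ∈ R ∨ (w, z) ∈ R) ∨ ∃ A, (z, A) ∈ Γ}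

/-- `R, Γ` is a labeled polytree sequent: its underlying undirected graph
    (on the occurring labels) is a tree. -/
def IsPolytreeSeq (R : RelSet) (Γ : Multiset (Label × Formula)) : Prop :=
  (∀ x y : Label, (x, y) ∈ R → (y, x) ∉ R) ∧
  ((SimpleGraph.fromRel fun a b => (a, b) ∈ R).induce (seqLabels R Γ)).IsTree

/-- The labeled edges `(u, v, ◇)` and `(v, u, ◆)` of the propagation graph
    determined by an edge set. -/
def propEdges (E : Finset (Label × Label)) : Set (Label × Label × Dmd) :=
  {e | ∃ u v : Label, (u, v) ∈ E ∧ (e = (u, v, Dmd.wd) ∨ e = (v, u, Dmd.bd))}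

/-- The deep propagation rules `DeepPr(P)` (premise, conclusion), expressed via
    the labeled polytree representation of nested sequents: from
    `X[⟨?⟩A]ᵢ[A]ⱼ` infer `X[⟨?⟩A]ᵢ[∅]ⱼ`, provided there is a path from node `i`
    (= `u`) to node `j` (= `v`) in the propagation graph of the premise whose
    string `Π` satisfies `ΠA → ⟨?⟩A ∈ (P ∪ I(P))*`. -/
def DeepPrL (P : Set PathAx) : NSeq → NSeq → Prop :=
  fun prem concl =>
    ∃ (r : Label) (G : LGraph) (u v : Label) (A : Formula) (d : Dmd)
      (Pi : List Dmd),
      LabT r prem G ∧ LPath G.E u v Pi ∧ PStar P ⟨Pi, d⟩ ∧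
      dmdF d A ∈ G.L u ∧ A ∈ G.L v ∧
      LabT r concl ⟨G.V, G.E, fun z => if z = v then (G.L v).erase A else G.L z⟩

/-- Substitution of the label `y` by the label `x`. -/
def subLabel (x y z : Label) : Label := if z = y then x else z


/-!
Up to the choice of fresh labels the translation `𝔏` is unique: two translations of the same
nested sequent differ by an injective relabelling of vertices that sends root to root.
Rearranging commas does not change the translation, and a display rule (rf) or (rp) does not
change the graph at all, it only moves the root to a neighbouring vertex. So every sequent
display-derivable from `X` has `𝔏ₓ(X)` itself as a translation, and uniqueness finishes the proof.
-/

lemma Finset.sum_filter_eq_of_subset {α β M : Type*} [AddCommMonoid M] [DecidableEq β]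
    {V W : Finset α} {L : α → M} (hVW : V ⊆ W) (hL : ∀ z ∉ V, L z = 0) (f : α → β) (b : β) :
    ∑ v ∈ W with f v = b, L v = ∑ v ∈ V with f v = b, L v := by
  rw [Finset.sum_filter, Finset.sum_filter]
  exact (Finset.sum_subset hVW fun v _ hv => by simp [hL v hv]).symm

lemma Set.InjOn.union_of_image_inter_subset {α β : Type*} {f : α → β} {s t : Set α} {c : α}
    (hs : InjOn f s) (ht : InjOn f t) (hcs : c ∈ s) (hct : c ∈ t)
    (h : f '' s ∩ f '' t ⊆ {f c}) : InjOn f (s ∪ t) := by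
  have key : ∀ a ∈ s, ∀ b ∈ t, f a = f b → a = b := fun a ha b hb hab => by
    have hac : f a = f c := h ⟨⟨a, ha, rfl⟩, ⟨b, hb, hab.symm⟩⟩
    rw [hs ha hcs hac, ht hb hct (hab ▸ hac)]
  rintro a (ha | ha) b (hb | hb) hab
  exacts [hs ha hb hab, key a ha b hb hab, (key b hb a ha hab.symm).symm, ht ha hb hab]

namespace LGraph

@[ext]
lemma ext {G H : LGraph} (hV : G.V = H.V) (hE : G.E = H.E) (hL : G.L = H.L) : G = H := by
  cases G; cases H; simp_all

lemma union_comm (G H : LGraph) : G.union H = H.union G :=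
  ext (Finset.union_comm _ _) (Finset.union_comm _ _) (funext fun _ => add_comm _ _)

lemma union_assoc (G H K : LGraph) : (G.union H).union K = G.union (H.union K) :=
  ext (Finset.union_assoc _ _ _) (Finset.union_assoc _ _ _) (funext fun _ => add_assoc _ _ _)

lemma union_empty (G : LGraph) : G.union ⟨∅, ∅, fun _ => 0⟩ = G :=
  ext (Finset.union_empty _) (Finset.union_empty _) (funext fun _ => add_zero _)

-- The translations of `∘{X}` and `•{X}` have this form, with `e = (x, y)` resp. `e = (y, x)`.
def graft (x y : Label) (e : Label × Label) (G : LGraph) : LGraph :=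
  ⟨insert x (insert y G.V), insert e G.E, G.L⟩

lemma union_graft_comm (G H : LGraph) (x y : Label) (e : Label × Label) :
    G.union (H.graft x y e) = (G.graft y x e).union H := by
  ext <;> simp only [union, graft, Finset.mem_union, Finset.mem_insert] <;> tauto

structure WellFormed (G : LGraph) : Prop where
  edge_mem : ∀ e ∈ G.E, e.1 ∈ G.V ∧ e.2 ∈ G.V
  label_eq_zero : ∀ z ∉ G.V, G.L z = 0

def map (f : Label → Label) (G : LGraph) : LGraph :=
  ⟨G.V.image f, G.E.image (Prod.map f f), fun z => ∑ v ∈ G.V with f v = z, G.L v⟩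

lemma map_union {G H : LGraph} (hG : G.WellFormed) (hH : H.WellFormed) (f : Label → Label) :
    (G.union H).map f = (G.map f).union (H.map f) := by
  refine ext (Finset.image_union _ _) (Finset.image_union _ _) (funext fun z => ?_)
  simp only [map, union, Finset.sum_add_distrib]
  rw [Finset.sum_filter_eq_of_subset Finset.subset_union_left hG.label_eq_zero,
    Finset.sum_filter_eq_of_subset Finset.subset_union_right hH.label_eq_zero]

lemma map_graft {G : LGraph} (hG : G.WellFormed) (f : Label → Label) (x y : Label)
    (e : Label × Label) :
    (G.graft x y e).map f = (G.map f).graft (f x) (f y) (Prod.map f f e) := by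
  refine ext ?_ ?_ (funext fun z => ?_)
  · simp [map, graft, Finset.image_insert]
  · simp [map, graft, Finset.image_insert]
  · exact Finset.sum_filter_eq_of_subset
      ((Finset.subset_insert _ _).trans (Finset.subset_insert _ _)) hG.label_eq_zero f z

lemma map_congr {G : LGraph} (hG : G.WellFormed) {f g : Label → Label}
    (h : Set.EqOn f g G.V) : G.map f = G.map g := by
  refine ext (Finset.image_congr h) (Finset.image_congr fun e he => ?_)
    (funext fun _ => Finset.sum_congr (Finset.filter_congr fun v hv => by rw [h hv])
      fun _ _ => rfl)
  obtain ⟨h1, h2⟩ := hG.edge_mem e (Finset.mem_coe.mp he)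
  exact Prod.ext (h h1) (h h2)

lemma iso_map {G : LGraph} (hG : G.WellFormed) {f : Label → Label} (hf : Set.InjOn f G.V) :
    G.Iso (G.map f) := by
  refine ⟨f, by simpa [map] using hf.bijOn_image, fun u hu v hv => ⟨fun h => ?_, fun h => ?_⟩,
    fun v hv => ?_⟩
  · exact Finset.mem_image_of_mem _ h
  · obtain ⟨⟨a, b⟩, hab, heq⟩ := Finset.mem_image.mp h
    obtain ⟨ha, hb⟩ := hG.edge_mem _ hab
    simp only [Prod.map, Prod.mk.injEq] at heq
    rwa [← hf ha hu heq.1, ← hf hb hv heq.2]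
  · simp only [map, Finset.sum_filter]
    rw [Finset.sum_eq_single_of_mem v hv fun w hw hne => if_neg fun h => hne (hf hw hv h),
      if_pos rfl]

-- The root need not be a vertex (as for `ε`), but it must not be merged with one.
structure RootedIso (f : Label → Label) (x y : Label) (G H : LGraph) : Prop where
  map_root : f x = y
  injOn : Set.InjOn f (insert x ↑G.V)
  map_eq : G.map f = H

namespace RootedIso

variable {f : Label → Label} {x y : Label} {G H : LGraph}

lemma image_eq (h : RootedIso f x y G H) : f '' insert x ↑G.V = insert y ↑H.V := by
  rw [Set.image_insert_eq, h.map_root, ← h.map_eq]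
  simp [map]

lemma iso (h : RootedIso f x y G H) (hG : G.WellFormed) : G.Iso H :=
  h.map_eq ▸ iso_map hG (h.injOn.mono (Set.subset_insert _ _))

lemma union {f₁ f₂ : Label → Label} {G₁ G₂ H₁ H₂ : LGraph} (h₁ : RootedIso f₁ x y G₁ H₁)
    (h₂ : RootedIso f₂ x y G₂ H₂) (hG₁ : G₁.WellFormed) (hG₂ : G₂.WellFormed)
    (hG : G₁.V ∩ G₂.V ⊆ {x}) (hH : H₁.V ∩ H₂.V ⊆ {y}) :
    RootedIso (fun z => if z ∈ G₁.V then f₁ z else f₂ z) x y (G₁.union G₂) (H₁.union H₂) := by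
  set f := fun z => if z ∈ G₁.V then f₁ z else f₂ z
  have hf₁ : Set.EqOn f f₁ (insert x ↑G₁.V) := by
    rintro z (rfl | hz)
    · by_cases hx : z ∈ G₁.V
      · simp [f, hx]
      · simp [f, hx, h₁.map_root, h₂.map_root]
    · simp [f, Finset.mem_coe.mp hz]
  have hf₂ : Set.EqOn f f₂ (insert x ↑G₂.V) := by
    intro z hz
    by_cases hz₁ : z ∈ G₁.V
    · have hzx : z = x := (Set.mem_insert_iff.mp hz).elim id fun hz₂ =>
        Finset.mem_singleton.mp (hG (Finset.mem_inter.mpr ⟨hz₁, hz₂⟩))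
      subst hzx
      simp [f, hz₁, h₁.map_root, h₂.map_root]
    · simp [f, hz₁]
  have hH' : insert y ↑H₁.V ∩ insert y ↑H₂.V ⊆ ({y} : Set Label) := by
    rw [← Set.insert_inter_distrib, Set.insert_subset_iff]
    exact ⟨rfl, by exact_mod_cast hH⟩
  refine ⟨(hf₁ (Set.mem_insert _ _)).trans h₁.map_root, ?_, ?_⟩
  · rw [show (G₁.union G₂).V = G₁.V ∪ G₂.V from rfl, Finset.coe_union,
      Set.insert_union_distrib]
    refine (h₁.injOn.congr hf₁.symm).union_of_image_inter_subset (h₂.injOn.congr hf₂.symm)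
      (Set.mem_insert _ _) (Set.mem_insert _ _) ?_
    rwa [hf₁.image_eq, hf₂.image_eq, h₁.image_eq, h₂.image_eq, hf₁ (Set.mem_insert _ _),
      h₁.map_root]
  · rw [map_union hG₁ hG₂, map_congr hG₁ (hf₁.mono (Set.subset_insert _ _)),
      map_congr hG₂ (hf₂.mono (Set.subset_insert _ _)), h₁.map_eq, h₂.map_eq]

lemma exists_graft {x' y' : Label} (h : RootedIso f y y' G H) (hG : G.WellFormed)
    (hx : x ∉ G.V) (hxy : x ≠ y) (hx' : x' ∉ H.V) (hxy' : x' ≠ y') :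
    ∃ g, RootedIso g x x' (G.graft x y (x, y)) (H.graft x' y' (x', y')) ∧
      RootedIso g x x' (G.graft x y (y, x)) (H.graft x' y' (y', x')) := by
  set g := Function.update f x x'
  have hgf : Set.EqOn g f (insert y ↑G.V) := fun z hz =>
    Function.update_of_ne (by rintro rfl; exact (Set.mem_insert_iff.mp hz).elim hxy hx) _ _
  have hgx : g x = x' := Function.update_self _ _ _
  have hgy : g y = y' := (hgf (Set.mem_insert _ _)).trans h.map_root
  have key : ∀ e, RootedIso g x x' (G.graft x y e) (H.graft x' y' (Prod.map g g e)) := by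
    intro e
    refine ⟨hgx, ?_, ?_⟩
    · have hxG : x ∉ insert y (↑G.V : Set Label) := fun hz =>
        (Set.mem_insert_iff.mp hz).elim hxy hx
      simp only [graft, Finset.coe_insert, Set.insert_idem]
      rw [Set.injOn_insert hxG, hgf.image_eq, h.image_eq, hgx]
      refine ⟨h.injOn.congr hgf.symm, fun hm => (Set.mem_insert_iff.mp hm).elim hxy' hx'⟩
    · rw [map_graft hG, hgx, hgy, map_congr hG (hgf.mono (Set.subset_insert _ _)), h.map_eq]
  exact ⟨g, by simpa [hgx, hgy] using key (x, y), by simpa [hgx, hgy] using key (y, x)⟩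

end RootedIso

end LGraph


namespace LabT

variable {x : Label}

lemma wellFormed {X : NSeq} {G : LGraph} (h : LabT x X G) : G.WellFormed := by
  induction h with
  | empty => exact ⟨by simp, by simp⟩
  | fml x A => exact ⟨by simp, fun z hz => by simp_all⟩
  | comma _ _ _ ihG ihH =>
    refine ⟨fun e he => ?_, fun z hz => ?_⟩
    · simp only [LGraph.union, Finset.mem_union] at he ⊢
      exact he.imp (ihG.edge_mem e) (ihH.edge_mem e) |>.elim
        (fun h => ⟨Or.inl h.1, Or.inl h.2⟩) (fun h => ⟨Or.inr h.1, Or.inr h.2⟩)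
    · simp only [LGraph.union, Finset.mem_union, not_or] at hz ⊢
      rw [ihG.label_eq_zero z hz.1, ihH.label_eq_zero z hz.2, add_zero]
  | white _ _ _ ih | black _ _ _ ih =>
    refine ⟨fun e he => ?_, fun z hz => ih.label_eq_zero z (by simp_all)⟩
    rcases Finset.mem_insert.mp he with rfl | he
    · simp
    · simp [ih.edge_mem e he]

lemma exists_rootedIso {X : NSeq} {y : Label} {G H : LGraph} (hG : LabT x X G)
    (hH : LabT y X H) : ∃ f, LGraph.RootedIso f x y G H := by
  induction hG generalizing y H with
  | empty => cases hH; exact ⟨fun _ => y, rfl, by simp, by ext <;> simp [LGraph.map]⟩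
  | fml x A =>
    cases hH
    refine ⟨fun _ => y, rfl, by simp, ?_⟩
    ext <;> simp [LGraph.map]
    split_ifs <;> simp_all [eq_comm]
  | comma hG₁ hG₂ hG ih₁ ih₂ =>
    cases hH with
    | comma hH₁ hH₂ hH =>
      obtain ⟨f₁, h₁⟩ := ih₁ hH₁
      obtain ⟨f₂, h₂⟩ := ih₂ hH₂
      exact ⟨_, h₁.union h₂ hG₁.wellFormed hG₂.wellFormed hG hH⟩
  | white hG₀ hx hxy ih =>
    cases hH with
    | white hH₀ hy hyy' =>
      obtain ⟨f, hf⟩ := ih hH₀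
      obtain ⟨g, hg, -⟩ := hf.exists_graft hG₀.wellFormed hx hxy hy hyy'
      exact ⟨g, hg⟩
  | black hG₀ hx hxy ih =>
    cases hH with
    | black hH₀ hy hyy' =>
      obtain ⟨f, hf⟩ := ih hH₀
      obtain ⟨g, -, hg⟩ := hf.exists_graft hG₀.wellFormed hx hxy hy hyy'
      exact ⟨g, hg⟩

variable {X Y Z : NSeq} {G : LGraph}

lemma comma_comm (h : LabT x (X.comma Y) G) : LabT x (Y.comma X) G := by
  cases h with
  | comma hX hY hXY =>
    rw [LGraph.union_comm]
    exact comma hY hX (by rwa [Finset.inter_comm])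

lemma comma_assoc (h : LabT x ((X.comma Y).comma Z) G) : LabT x (X.comma (Y.comma Z)) G := by
  cases h with
  | comma hXY hZ h₁ =>
    cases hXY with
    | comma hX hY h₂ =>
      rw [LGraph.union_assoc]
      refine comma hX (comma hY hZ fun z hz => h₁ ?_) fun z hz => ?_
      · simp_all [LGraph.union]
      · simp only [LGraph.union, Finset.mem_inter, Finset.mem_union] at hz h₁
        rcases hz with ⟨hzX, hzY | hzZ⟩
        exacts [h₂ (Finset.mem_inter.mpr ⟨hzX, hzY⟩), h₁ (by simp [hzX, hzZ])]

lemma comma_assoc_symm (h : LabT x (X.comma (Y.comma Z)) G) :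
    LabT x ((X.comma Y).comma Z) G :=
  h.comma_comm.comma_assoc.comma_comm.comma_assoc.comma_comm

lemma comma_empty_iff : LabT x (X.comma .empty) G ↔ LabT x X G := by
  refine ⟨fun h => ?_, fun h => LGraph.union_empty G ▸ comma h (empty x) (by simp)⟩
  cases h with
  | comma hX hε _ => cases hε; rwa [LGraph.union_empty]

lemma iff_of_nequiv (h : NEquiv X Y) : LabT x X G ↔ LabT x Y G := by
  induction h generalizing x G with
  | refl => rfl
  | symm _ ih => exact ih.symm
  | trans _ _ ih₁ ih₂ => exact ih₁.trans ih₂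
  | comm => exact ⟨comma_comm, comma_comm⟩
  | assoc => exact ⟨comma_assoc, comma_assoc_symm⟩
  | unit => exact comma_empty_iff
  | commaCongr _ _ ih₁ ih₂ =>
    constructor <;> rintro (_ | _ | ⟨hX, hY, hXY⟩)
    exacts [comma (ih₁.mp hX) (ih₂.mp hY) hXY, comma (ih₁.mpr hX) (ih₂.mpr hY) hXY]
  | whiteCongr _ ih =>
    constructor <;> rintro (_ | _ | _ | ⟨hX, hx, hxy⟩)
    exacts [white (ih.mp hX) hx hxy, white (ih.mpr hX) hx hxy]
  | blackCongr _ ih =>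
    constructor <;> rintro (_ | _ | _ | _ | ⟨hX, hx, hxy⟩)
    exacts [black (ih.mp hX) hx hxy, black (ih.mpr hX) hx hxy]

lemma display_side_conditions {y : Label} {A B : Finset Label}
    (h : A ∩ insert x (insert y B) ⊆ {x}) (hx : x ∉ B) (hxy : x ≠ y) :
    y ∉ A ∧ insert y (insert x A) ∩ B ⊆ {y} := by
  refine ⟨fun hy => hxy (Finset.mem_singleton.mp (h (by simp [hy]))).symm, fun z hz => ?_⟩
  simp only [Finset.mem_inter, Finset.mem_insert] at hz
  rcases hz with ⟨rfl | rfl | hzA, hzB⟩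
  · exact Finset.mem_singleton_self _
  · exact absurd hzB hx
  · have hzx := Finset.mem_singleton.mp (h (Finset.mem_inter.mpr ⟨hzA, by simp [hzB]⟩))
    exact absurd (hzx ▸ hzB) hx

lemma rf (h : LabT x (X.comma Y.white) G) : ∃ y, LabT y (X.black.comma Y) G := by
  cases h with
  | comma hX hY hXY =>
    cases hY with
    | @white _ y _ _ hY hx hxy =>
      obtain ⟨hy, hside⟩ := display_side_conditions hXY hx hxy
      exact ⟨y, (LGraph.union_graft_comm _ _ _ _ _).symm ▸
        comma (black hX hy hxy.symm) hY hside⟩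

lemma rp (h : LabT x (X.comma Y.black) G) : ∃ y, LabT y (X.white.comma Y) G := by
  cases h with
  | comma hX hY hXY =>
    cases hY with
    | @black _ y _ _ hY hx hxy =>
      obtain ⟨hy, hside⟩ := display_side_conditions hXY hx hxy
      exact ⟨y, (LGraph.union_graft_comm _ _ _ _ _).symm ▸
        comma (white hX hy hxy.symm) hY hside⟩

end LabT

lemma DisplayDeriv.exists_labT {X Z : NSeq} (h : DisplayDeriv X Z) {x : Label} {G : LGraph}
    (hX : LabT x X G) : ∃ z, LabT z Z G := by
  induction h generalizing x with
  | refl => exact ⟨x, hX⟩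
  | equiv hXY _ ih => exact ih ((LabT.iff_of_nequiv hXY).mp hX)
  | rf _ ih => obtain ⟨y, hy⟩ := hX.rf; exact ih hy
  | rp _ ih => obtain ⟨y, hy⟩ := hX.rp; exact ih hy

/-- Corollary `isoresidcor`: for all labels `x, y` and nested
    sequents `X, Y`, if `X` and `Y` are display equivalent then `𝔏ₓ(X)` and
    `𝔏_y(Y)` are isomorphic labeled graphs. -/
theorem display_equivalent_iso (x y : Label) (X Y : NSeq)
    (hXY : DisplayEquiv X Y) (G H : LGraph)
    (hG : LabT x X G) (hH : LabT y Y H) :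
    G.Iso H := by
  obtain ⟨z, hz⟩ := hXY.1.exists_labT hG
  obtain ⟨f, hf⟩ := hz.exists_rootedIso hH
  exact hf.iso hG.wellFormed
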